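/- Let G(ξ) = (1/4π)e^{−|ξ|²/4} and let w̃ ∈ L²_w(ℝ²) (i.e. G^{−1/2} w̃ ∈ L²) be sufficiently regular, and let ṽ = K_{BS} ⋆ w̃ be its Biot-Savart velocity. Then ∫_{ℝ²} G^{−1}(ξ) w̃(ξ) ṽ(ξ)·∇G(ξ) dξ = 0. -/

import Mathlib

open Real MeasureTheory
open scoped ENNReal RealInnerProductSpace

noncomputable section

abbrev E2 := EuclideanSpace ℝ (Fin 2)

def perp (x : E2) : E2 := (EuclideanSpace.equiv (Fin 2) ℝ).symm ![-(x 1), x 0]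

def Gg (ξ : E2) : ℝ := (1 / (4 * π)) * Real.exp (-‖ξ‖ ^ 2 / 4)

/-!
Since `∇G(ξ) = -(G(ξ)/2) ξ`, the integrand equals `-(1/4π) ∫ w(ξ) w(η) (ξ-η)^⊥·ξ / |ξ-η|² dη`.
This double integral converges absolutely, because `|ξ-η|⁻¹` is the sum of an integrable kernel
and a bounded one, and it vanishes because its integrand is antisymmetric under `ξ ↔ η`:
`(ξ-η)^⊥·ξ = (ξ-η)^⊥·η`.
-/

open Metric

theorem integral_prod_self_eq_zero_of_swap {α E : Type*} [MeasurableSpace α]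
    [NormedAddCommGroup E] [NormedSpace ℝ E] {μ : Measure α} [SFinite μ] {F : α × α → E}
    (hF : ∀ p, F p.swap = -F p) : ∫ p, F p ∂μ.prod μ = 0 := by
  have := IsAddTorsionFree.of_isTorsionFree ℝ E
  have h := integral_prod_swap (μ := μ) (ν := μ) F
  simp only [hF, integral_neg] at h
  exact neg_eq_self.mp h

theorem integrable_prod_of_norm_le_mul {α β E : Type*} [MeasurableSpace α] [MeasurableSpace β]
    [NormedAddCommGroup E] {μ : Measure α} {ν : Measure β} [SFinite ν] {F : α × β → E}
    {g : α → ℝ} {h : α → β → ℝ} {C : ℝ} (hF : AEStronglyMeasurable F (μ.prod ν))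
    (hg : Integrable g μ) (hg₀ : ∀ x, 0 ≤ g x) (hh : ∀ x, Integrable (h x) ν)
    (hhC : ∀ x, ∫ y, h x y ∂ν ≤ C) (hFgh : ∀ x y, ‖F (x, y)‖ ≤ g x * h x y) :
    Integrable F (μ.prod ν) := by
  refine (integrable_prod_iff hF).2 ⟨?_, ?_⟩
  · filter_upwards [hF.prodMk_left] with x hFx
    exact ((hh x).const_mul (g x)).mono' hFx (ae_of_all _ (hFgh x))
  refine (hg.mul_const C).mono' hF.norm.integral_prod_right' (ae_of_all _ fun x => ?_)
  rw [Real.norm_of_nonneg (integral_nonneg fun y => norm_nonneg _)]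
  calc ∫ y, ‖F (x, y)‖ ∂ν ≤ ∫ y, g x * h x y ∂ν :=
        integral_mono_of_nonneg (ae_of_all _ fun y => norm_nonneg _)
          ((hh x).const_mul (g x)) (ae_of_all _ (hFgh x))
    _ = g x * ∫ y, h x y ∂ν := integral_const_mul _ _
    _ ≤ g x * C := mul_le_mul_of_nonneg_left (hhC x) (hg₀ x)

theorem inv_norm_le_indicator_ball_add_one {E : Type*} [SeminormedAddCommGroup E] (u : E) :
    ‖u‖⁻¹ ≤ (ball (0 : E) 1).indicator (fun u => ‖u‖⁻¹) u + 1 := by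
  by_cases hu : u ∈ ball (0 : E) 1
  · simp [Set.indicator_of_mem hu]
  · rw [Set.indicator_of_notMem hu, zero_add]
    exact inv_le_one_of_one_le₀ (by simpa using hu)

theorem norm_mul_inv_norm_sub_le {E F : Type*} [SeminormedAddCommGroup E]
    [SeminormedAddCommGroup F] {f : E → F} {M : ℝ} (hM : ∀ x, ‖f x‖ ≤ M) (ξ η : E) :
    ‖f η‖ * ‖ξ - η‖⁻¹ ≤ M * (ball (0 : E) 1).indicator (fun u => ‖u‖⁻¹) (ξ - η) + ‖f η‖ := by
  have hk : 0 ≤ (ball (0 : E) 1).indicator (fun u => ‖u‖⁻¹) (ξ - η) :=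
    Set.indicator_nonneg (fun _ _ => by positivity) _
  calc ‖f η‖ * ‖ξ - η‖⁻¹
      ≤ ‖f η‖ * ((ball (0 : E) 1).indicator (fun u => ‖u‖⁻¹) (ξ - η) + 1) :=
        mul_le_mul_of_nonneg_left (inv_norm_le_indicator_ball_add_one _) (norm_nonneg _)
    _ ≤ M * (ball (0 : E) 1).indicator (fun u => ‖u‖⁻¹) (ξ - η) + ‖f η‖ := by
        rw [mul_add, mul_one]; gcongr; exact hM η

section InverseNormKernel

variable {E F : Type*} [NormedAddCommGroup E] [NormedSpace ℝ E] [FiniteDimensional ℝ E]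
  [MeasurableSpace E] [BorelSpace E] [NormedAddCommGroup F] {μ : Measure E} [μ.IsAddHaarMeasure]

theorem integrable_indicator_ball_inv_norm (hE : 1 < Module.finrank ℝ E) :
    Integrable ((ball (0 : E) 1).indicator fun u => ‖u‖⁻¹) μ := by
  refine (integrable_indicator_iff measurableSet_ball).2 <|
    integrableOn_ball_of_norm_le_rpow (C := 1) (α := 1) hE.le (by exact_mod_cast hE)
      (ae_of_all _ fun u => ?_) (by fun_prop)
  simp [Real.rpow_neg_one]

variable {f : E → F} {M : ℝ}

theorem integrable_norm_mul_inv_norm_sub (hE : 1 < Module.finrank ℝ E) (hf : Integrable f μ)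
    (hM : ∀ x, ‖f x‖ ≤ M) (ξ : E) : Integrable (fun η => ‖f η‖ * ‖ξ - η‖⁻¹) μ := by
  have hk := (integrable_indicator_ball_inv_norm (μ := μ) hE).comp_sub_left ξ
  refine ((hk.const_mul M).add hf.norm).mono' (hf.norm.aestronglyMeasurable.mul (by fun_prop))
    (ae_of_all _ fun η => ?_)
  rw [Real.norm_of_nonneg (by positivity)]
  exact norm_mul_inv_norm_sub_le hM ξ η

theorem integral_norm_mul_inv_norm_sub_le (hE : 1 < Module.finrank ℝ E) (hf : Integrable f μ)
    (hM : ∀ x, ‖f x‖ ≤ M) (ξ : E) :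
    ∫ η, ‖f η‖ * ‖ξ - η‖⁻¹ ∂μ ≤
      M * ∫ u, (ball (0 : E) 1).indicator (fun u => ‖u‖⁻¹) u ∂μ + ∫ η, ‖f η‖ ∂μ := by
  have hk := (integrable_indicator_ball_inv_norm (μ := μ) hE).comp_sub_left ξ
  calc ∫ η, ‖f η‖ * ‖ξ - η‖⁻¹ ∂μ
      ≤ ∫ η, M * (ball (0 : E) 1).indicator (fun u => ‖u‖⁻¹) (ξ - η) + ‖f η‖ ∂μ :=
        integral_mono (integrable_norm_mul_inv_norm_sub hE hf hM ξ)
          ((hk.const_mul M).add hf.norm) (norm_mul_inv_norm_sub_le hM ξ)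
    _ = _ := by
        rw [integral_add (hk.const_mul M) hf.norm, integral_const_mul,
          integral_sub_left_eq_self ((ball (0 : E) 1).indicator fun u => ‖u‖⁻¹) μ ξ]

end InverseNormKernel

theorem inner_perp (x y : E2) : ⟪perp x, y⟫ = x 0 * y 1 - x 1 * y 0 := by
  simp [perp, PiLp.inner_apply, Fin.sum_univ_two]
  ring

theorem norm_perp (x : E2) : ‖perp x‖ = ‖x‖ := by
  simp [perp, EuclideanSpace.norm_eq, Fin.sum_univ_two, add_comm]

theorem continuous_perp : Continuous perp := by
  unfold perp; fun_prop

theorem inner_perp_sub_eq_neg_swap (ξ η : E2) : ⟪perp (η - ξ), η⟫ = -⟪perp (ξ - η), ξ⟫ := by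
  simp only [inner_perp, PiLp.sub_apply]
  ring

theorem hasGradientAt_Gg (ξ : E2) : HasGradientAt Gg (-(Gg ξ / 2) • ξ) ξ := by
  have hG : Gg = fun x => 1 / (4 * π) * exp (-1 / 4 * ‖x‖ ^ 2) := by
    funext x; simp only [Gg]; ring_nf
  have h := ((hasStrictFDerivAt_norm_sq ξ).hasFDerivAt.const_mul (-1 / 4 : ℝ)).exp.const_mul
    (1 / (4 * π))
  rw [hG]
  convert h.hasGradientAt using 1
  rw [eq_comm, LinearIsometryEquiv.symm_apply_eq]
  ext z
  simp [InnerProductSpace.toDual_apply_apply]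
  ring

theorem Gg_pos (ξ : E2) : 0 < Gg ξ := by
  unfold Gg; positivity

theorem gradient_Gg (ξ : E2) : gradient Gg ξ = -(Gg ξ / 2) • ξ :=
  (hasGradientAt_Gg ξ).gradient

def biotSavartIntegrand (w : E2 → ℝ) (ξ η : E2) : E2 := (w η / ‖ξ - η‖ ^ 2) • perp (ξ - η)

def biotSavart (w : E2 → ℝ) (ξ : E2) : E2 := (2 * π)⁻¹ • ∫ η, biotSavartIntegrand w ξ η

def biotSavartPairing (w : E2 → ℝ) (ξ η : E2) : ℝ := w ξ * ⟪biotSavartIntegrand w ξ η, ξ⟫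

theorem norm_biotSavartIntegrand (w : E2 → ℝ) (ξ η : E2) :
    ‖biotSavartIntegrand w ξ η‖ = ‖w η‖ * ‖ξ - η‖⁻¹ := by
  rw [biotSavartIntegrand, norm_smul, norm_div, norm_pow, norm_norm, norm_perp]
  rcases eq_or_ne ‖ξ - η‖ 0 with h | h
  · simp [h]
  · field_simp

theorem biotSavartPairing_swap (w : E2 → ℝ) (ξ η : E2) :
    biotSavartPairing w η ξ = -biotSavartPairing w ξ η := by
  rw [biotSavartPairing, biotSavartPairing, biotSavartIntegrand, biotSavartIntegrand,
    real_inner_smul_left, real_inner_smul_left, inner_perp_sub_eq_neg_swap, norm_sub_rev η ξ]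
  ring

theorem norm_biotSavartPairing_le (w : E2 → ℝ) (ξ η : E2) :
    ‖biotSavartPairing w ξ η‖ ≤ ‖ξ‖ * ‖w ξ‖ * (‖w η‖ * ‖ξ - η‖⁻¹) := by
  rw [biotSavartPairing, norm_mul, ← norm_biotSavartIntegrand w ξ η]
  calc ‖w ξ‖ * ‖⟪biotSavartIntegrand w ξ η, ξ⟫‖
      ≤ ‖w ξ‖ * (‖biotSavartIntegrand w ξ η‖ * ‖ξ‖) := by gcongr; exact norm_inner_le_norm _ _
    _ = _ := by ring

section BiotSavart

variable {w : E2 → ℝ} {M : ℝ}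

theorem one_lt_finrank_E2 : 1 < Module.finrank ℝ E2 := by simp

theorem integrable_biotSavartIntegrand (hw : Integrable w) (hM : ∀ x, ‖w x‖ ≤ M) (ξ : E2) :
    Integrable (biotSavartIntegrand w ξ) := by
  refine (integrable_norm_mul_inv_norm_sub one_lt_finrank_E2 hw hM ξ).mono'
    ((hw.aemeasurable.div (by fun_prop)).aestronglyMeasurable.smul
      (continuous_perp.comp (by fun_prop)).aestronglyMeasurable)
    (ae_of_all _ fun η => (norm_biotSavartIntegrand w ξ η).le)

theorem mul_inner_biotSavart_self (hw : Integrable w) (hM : ∀ x, ‖w x‖ ≤ M) (ξ : E2) :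
    w ξ * ⟪biotSavart w ξ, ξ⟫ = (2 * π)⁻¹ * ∫ η, biotSavartPairing w ξ η := by
  have h : ∫ η, biotSavartPairing w ξ η = w ξ * ∫ η, ⟪ξ, biotSavartIntegrand w ξ η⟫ := by
    rw [← integral_const_mul]
    simp only [biotSavartPairing, real_inner_comm ξ]
  rw [h, integral_inner (integrable_biotSavartIntegrand hw hM ξ), biotSavart,
    real_inner_smul_left, real_inner_comm]
  ring

theorem integrable_biotSavartPairing (hw : Integrable w) (hM : ∀ x, ‖w x‖ ≤ M)
    (hw₁ : Integrable fun ξ => ‖ξ‖ * ‖w ξ‖) :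
    Integrable (Function.uncurry (biotSavartPairing w)) (volume.prod volume) := by
  refine integrable_prod_of_norm_le_mul ?_ hw₁ (fun ξ => by positivity)
    (integrable_norm_mul_inv_norm_sub one_lt_finrank_E2 hw hM)
    (integral_norm_mul_inv_norm_sub_le one_lt_finrank_E2 hw hM) (norm_biotSavartPairing_le w)
  have hw' := hw.aestronglyMeasurable
  have hK : AEStronglyMeasurable (fun p : E2 × E2 => biotSavartIntegrand w p.1 p.2)
      (volume.prod volume) :=
    (hw'.comp_snd.aemeasurable.div (by fun_prop)).aestronglyMeasurable.smul
      (continuous_perp.comp (by fun_prop)).aestronglyMeasurable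
  exact hw'.comp_fst.mul (hK.inner continuous_fst.aestronglyMeasurable)

theorem Gg_inv_mul_inner_gradient (hw : Integrable w) (hM : ∀ x, ‖w x‖ ≤ M) (ξ : E2) :
    (Gg ξ)⁻¹ * w ξ * ⟪biotSavart w ξ, gradient Gg ξ⟫ =
      -(4 * π)⁻¹ * ∫ η, biotSavartPairing w ξ η := by
  rw [gradient_Gg, real_inner_smul_right]
  calc (Gg ξ)⁻¹ * w ξ * (-(Gg ξ / 2) * ⟪biotSavart w ξ, ξ⟫)
      = -(1 / 2) * (w ξ * ⟪biotSavart w ξ, ξ⟫) := by field_simp [(Gg_pos ξ).ne']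
    _ = _ := by rw [mul_inner_biotSavart_self hw hM ξ]; ring

end BiotSavart

theorem stmt14_general (w : SchwartzMap E2 ℝ) (v : E2 → E2)
    (hv : ∀ ξ, v ξ = (2 * π)⁻¹ • ∫ η, (w η / ‖ξ - η‖ ^ 2) • perp (ξ - η)) :
    ∫ ξ, (Gg ξ)⁻¹ * w ξ * ⟪v ξ, gradient Gg ξ⟫ = 0 := by
  have hM : ∀ x, ‖w x‖ ≤ SchwartzMap.seminorm ℝ 0 0 w := w.norm_le_seminorm ℝ
  have hw₁ : Integrable fun ξ => ‖ξ‖ * ‖w ξ‖ := by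
    simpa using w.integrable_pow_mul volume 1
  obtain rfl : v = biotSavart w := funext hv
  calc ∫ ξ, (Gg ξ)⁻¹ * w ξ * ⟪biotSavart w ξ, gradient Gg ξ⟫
      = -(4 * π)⁻¹ * ∫ p, biotSavartPairing w p.1 p.2 ∂volume.prod volume := by
        simp_rw [Gg_inv_mul_inner_gradient w.integrable hM]
        rw [integral_const_mul,
          integral_integral (integrable_biotSavartPairing w.integrable hM hw₁)]
    _ = 0 := by
        rw [integral_prod_self_eq_zero_of_swap fun p => biotSavartPairing_swap w p.1 p.2,
          mul_zero]

/-- if `w̃` is sufficiently regular (here: Schwartz) with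
`G^{−1/2} w̃ ∈ L²`, and `ṽ = K_{BS} ⋆ w̃` is its Biot-Savart velocity, then
`∫ G^{−1} w̃ ṽ·∇G = 0`. -/
theorem stmt14 (w : SchwartzMap E2 ℝ) (v : E2 → E2)
    (hw : MemLp (fun ξ => Gg ξ ^ (-(1 : ℝ) / 2) * w ξ) 2 volume)
    (hv : ∀ ξ, v ξ = (2 * π)⁻¹ • ∫ η, (w η / ‖ξ - η‖ ^ 2) • perp (ξ - η)) :
    ∫ ξ, (Gg ξ)⁻¹ * w ξ * ⟪v ξ, gradient Gg ξ⟫ = 0 :=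
  stmt14_general w v hv

end
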